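/- Let X be a compact Hausdorff non-scattered space with K = ker(X), and A a subalgebra of C(X) separating points and containing constants. If A↾K is dense in C(K), then A is dense in C(X). -/

import Mathlib

open Set

/-- The restriction algebra `A↾K`. -/
def restrictSet {X : Type*} [TopologicalSpace X] (A : Subalgebra ℂ C(X, ℂ)) (K : Set X) :
    Set C(K, ℂ) :=
  {g | ∃ f ∈ A, f.restrict K = g}

/-!
Let `B` be the closure of `A` and call a closed set `F` determining if every function vanishing
on `F` lies in `B`. By Zorn's lemma and compactness there is a minimal closed determining set `F`.
If `F ⊄ K`, then `F` has a point `p ∉ K` that is isolated in `F`, and `F \ {p}` is still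
determining as soon as `A` contains functions equal to `1` at `p` and uniformly small on
`F \ {p}`. If there are none, `F \ {p}` dominates `p`: `|f p| ≤ max_{F \ {p}} |f|` for `f ∈ A`.
A minimal closed set dominating `p` has no isolated point `q`, since otherwise
`(f - f q) * g`, with `g p = 1` and `g` small off `q`, forces `f p = f q` for all `f ∈ A`;
so it lies in `K`. But density of `A↾K` yields `f ∈ A` with `f p = 1` and `|f| < 1` on `K`.
Hence `F ⊆ K`, and density of `A↾K` once more gives `B = C(X, ℂ)`.
-/

open Filter Topology

section Topology

variable {X : Type*} [TopologicalSpace X]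

theorem IsClosed.diff_singleton_of_not_accPt {G : Set X} {q : X} (hG : IsClosed G)
    (hq : ¬AccPt q (𝓟 G)) : IsClosed (G \ {q}) := by
  refine isClosed_iff_accPt.2 fun a ha => ?_
  have ha' : AccPt a (𝓟 G) := ha.mono (principal_mono.2 sdiff_subset)
  exact ⟨isClosed_iff_accPt.1 hG a ha', by rintro rfl; exact hq ha'⟩

theorem exists_not_accPt_of_not_subset {K F : Set X} (hK : IsClosed K)
    (hKmax : ∀ P : Set X, Perfect P → P ⊆ K) (hFK : ¬F ⊆ K) :
    ∃ p ∈ F, p ∉ K ∧ ¬AccPt p (𝓟 F) := by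
  have hnp : ¬Preperfect (F \ K) := fun h =>
    hFK fun x hxF => by_contra fun hxK =>
      hxK (hKmax _ h.perfect_closure (subset_closure ⟨hxF, hxK⟩))
  obtain ⟨p, hpF, hpK, hp⟩ : ∃ p ∈ F, p ∉ K ∧ ¬AccPt p (𝓟 (F \ K)) := by
    simpa [Preperfect] using hnp
  refine ⟨p, hpF, hpK, fun hacc => hp ?_⟩
  simpa [inter_comm, ← sdiff_eq] using hacc.nhds_inter (hK.isOpen_compl.mem_nhds hpK)

theorem exists_minimal_isClosed {P : Set X → Prop}
    (hP : ∀ c : Set (Set X), c.Nonempty → IsChain (· ⊆ ·) c →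
      (∀ F ∈ c, IsClosed F ∧ P F) → P (⋂₀ c))
    {S : Set X} (hS : IsClosed S) (hPS : P S) :
    ∃ G ⊆ S, Minimal (fun F => IsClosed F ∧ P F) G :=
  zorn_superset_nonempty {F | IsClosed F ∧ P F} (fun c hc hch hne =>
    ⟨⋂₀ c, ⟨isClosed_sInter fun _ hF => (hc hF).1, hP c hne hch hc⟩,
      fun _ => sInter_subset_of_mem⟩) S ⟨hS, hPS⟩

theorem Minimal.not_diff_singleton {P : Set X → Prop} {G : Set X} {q : X}
    (hG : Minimal (fun F => IsClosed F ∧ P F) G) (hq : q ∈ G) (hacc : ¬AccPt q (𝓟 G)) :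
    ¬P (G \ {q}) := fun h =>
  (hG.le_of_le ⟨hG.prop.1.diff_singleton_of_not_accPt hacc, h⟩ sdiff_subset hq).2 rfl

theorem IsChain.sInter_inter_nonempty [CompactSpace X] {c : Set (Set X)} (hne : c.Nonempty)
    (hch : IsChain (· ⊆ ·) c) (hcl : ∀ F ∈ c, IsClosed F) {Z : Set X} (hZ : IsClosed Z)
    (hmeet : ∀ F ∈ c, (F ∩ Z).Nonempty) : (⋂₀ c ∩ Z).Nonempty := by
  have : Nonempty c := hne.to_subtype
  have hdir : Directed (· ⊇ ·) fun F : c => (F : Set X) ∩ Z := by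
    rintro ⟨F₁, h₁⟩ ⟨F₂, h₂⟩
    rcases hch.total h₁ h₂ with h | h
    · exact ⟨⟨F₁, h₁⟩, subset_rfl, inter_subset_inter_left Z h⟩
    · exact ⟨⟨F₂, h₂⟩, inter_subset_inter_left Z h, subset_rfl⟩
  have := IsCompact.nonempty_iInter_of_directed_nonempty_isCompact_isClosed _ hdir
    (fun F => hmeet F F.2) (fun F => ((hcl F F.2).inter hZ).isCompact)
    (fun F => (hcl F F.2).inter hZ)
  rwa [← iInter_inter, ← sInter_eq_iInter] at this

theorem IsClosed.mem_of_forall_dist_le {Y : Type*} [PseudoMetricSpace Y] {s : Set Y} {y : Y}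
    (hs : IsClosed s) (h : ∀ ε > 0, ∃ z ∈ s, dist z y ≤ ε) : y ∈ s :=
  hs.closure_subset ((mem_closure_iff_nhds_basis Metric.nhds_basis_closedBall).2 h)

end Topology

theorem ContinuousMap.exists_eq_zero_norm_sub_le {X E : Type*} [TopologicalSpace X]
    [NormedAddCommGroup E] [NormedSpace ℝ E] (h : C(X, E)) {ε : ℝ} (hε : 0 < ε) :
    ∃ w : C(X, E), (∀ x, ‖h x‖ ≤ ε → w x = 0) ∧ ∀ x, ‖w x - h x‖ ≤ ε := by
  have hmax : ∀ x, 0 < max ε ‖h x‖ := fun x => hε.trans_le (le_max_left _ _)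
  refine ⟨⟨fun x => (1 - ε / max ε ‖h x‖) • h x,
    by fun_prop (disch := exact fun x => (hmax x).ne')⟩,
    fun x hx => by simp [max_eq_left hx, hε.ne'], fun x => ?_⟩
  rw [ContinuousMap.coe_mk, sub_smul, one_smul, sub_sub_cancel_left, norm_neg, norm_smul,
    Real.norm_of_nonneg (div_nonneg hε.le (hmax x).le), div_mul_eq_mul_div,
    div_le_iff₀ (hmax x)]
  exact mul_le_mul_of_nonneg_left (le_max_right _ _) hε.le

section Determining

variable {X : Type*} [TopologicalSpace X] {B : Submodule ℂ C(X, ℂ)} {F : Set X}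

/-- The essential set `E(B)` is the smallest closed determining set. -/
def IsDetermining (B : Submodule ℂ C(X, ℂ)) (F : Set X) : Prop :=
  ∀ h : C(X, ℂ), (∀ x ∈ F, h x = 0) → h ∈ B

theorem IsDetermining.mono {F' : Set X} (hF : IsDetermining B F) (hFF' : F ⊆ F') :
    IsDetermining B F' :=
  fun h hh => hF h fun x hx => hh x (hFF' hx)

theorem IsDetermining.exists_dist_le [CompactSpace X] (hF : IsDetermining B F)
    {h b : C(X, ℂ)} (hb : b ∈ B) {ε : ℝ} (hε : 0 < ε)
    (hhb : ∀ x ∈ F, ‖h x - b x‖ ≤ ε) : ∃ w ∈ B, dist w h ≤ ε := by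
  obtain ⟨w, hw0, hw⟩ := (h - b).exists_eq_zero_norm_sub_le hε
  refine ⟨b + w, B.add_mem hb (hF w fun x hx => hw0 x (hhb x hx)), ?_⟩
  rw [dist_eq_norm, ContinuousMap.norm_le _ hε.le]
  intro x
  simpa [sub_sub_eq_add_sub, add_comm] using hw x

theorem IsDetermining.sInter [CompactSpace X] (hB : IsClosed (B : Set C(X, ℂ)))
    {c : Set (Set X)} (hne : c.Nonempty) (hch : IsChain (· ⊆ ·) c)
    (hc : ∀ F ∈ c, IsClosed F ∧ IsDetermining B F) : IsDetermining B (⋂₀ c) := by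
  intro h hh
  refine hB.mem_of_forall_dist_le fun ε hε => ?_
  obtain ⟨F, hFc, hF⟩ : ∃ F ∈ c, ∀ x ∈ F, ‖h x‖ ≤ ε := by
    by_contra! hbig
    obtain ⟨x, hxc, hxε⟩ := hch.sInter_inter_nonempty hne (fun F hF => (hc F hF).1)
      (isClosed_le continuous_const h.continuous.norm)
      fun F hF => (hbig F hF).imp fun _ hx => ⟨hx.1, hx.2.le⟩
    have : ε ≤ 0 := by simpa [hh x hxc] using hxε
    linarith
  exact (hc F hFc).2.exists_dist_le B.zero_mem hε (by simpa using hF)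

end Determining

section Dominates

variable {X : Type*} [TopologicalSpace X]

/-- For closed `S`: `p` lies in the `A`-convex hull of `S`. -/
def Dominates (A : Subalgebra ℂ C(X, ℂ)) (S : Set X) (p : X) : Prop :=
  ∀ f ∈ A, ∃ x ∈ S, ‖f p‖ ≤ ‖f x‖

variable {A B : Subalgebra ℂ C(X, ℂ)} {S : Set X} {p : X}

theorem Dominates.mono {T : Set X} (h : Dominates A S p) (hST : S ⊆ T) : Dominates A T p :=
  fun f hf => (h f hf).imp fun _ hx => ⟨hST hx.1, hx.2⟩

theorem Dominates.of_le (h : Dominates B S p) (hAB : A ≤ B) : Dominates A S p :=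
  fun f hf => h f (hAB hf)

theorem Dominates.sInter [CompactSpace X] {c : Set (Set X)} (hne : c.Nonempty)
    (hch : IsChain (· ⊆ ·) c)
    (hc : ∀ F ∈ c, IsClosed F ∧ Dominates A F p) : Dominates A (⋂₀ c) p := fun f hf =>
  hch.sInter_inter_nonempty hne (fun F hF => (hc F hF).1)
    (isClosed_le continuous_const f.continuous.norm) fun F hF => (hc F hF).2 f hf

theorem exists_apply_eq_one_norm_le_of_not_dominates (hS : IsCompact S)
    (h : ¬Dominates A S p) {ε : ℝ} (hε : 0 < ε) : ∃ g ∈ A, g p = 1 ∧ ∀ x ∈ S, ‖g x‖ ≤ ε := by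
  rcases S.eq_empty_or_nonempty with rfl | ⟨y, hy⟩
  · exact ⟨1, A.one_mem, rfl, by simp⟩
  obtain ⟨f, hfA, hf⟩ : ∃ f ∈ A, ∀ x ∈ S, ‖f x‖ < ‖f p‖ := by simpa [Dominates] using h
  have hfp : f p ≠ 0 := norm_pos_iff.1 ((norm_nonneg _).trans_lt (hf y hy))
  set g := (f p)⁻¹ • f
  have hg : ∀ x, ‖g x‖ = ‖f x‖ / ‖f p‖ := fun x => by simp [g, div_eq_inv_mul]
  obtain ⟨x₁, hx₁S, hx₁⟩ := hS.exists_isMaxOn ⟨y, hy⟩ g.continuous.norm.continuousOn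
  have hδ : ‖g x₁‖ < 1 := by rw [hg, div_lt_one (norm_pos_iff.2 hfp)]; exact hf x₁ hx₁S
  obtain ⟨n, hn⟩ := exists_pow_lt_of_lt_one hε hδ
  refine ⟨g ^ n, pow_mem (A.smul_mem hfA _) n, by simp [g, hfp], fun x hx => ?_⟩
  calc ‖(g ^ n) x‖ = ‖g x‖ ^ n := by simp
    _ ≤ ‖g x₁‖ ^ n := pow_le_pow_left₀ (norm_nonneg _) (hx₁ hx) n
    _ ≤ ε := hn.le

theorem Dominates.apply_eq_of_not_dominates_diff_singleton [CompactSpace X] {G : Set X}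
    {q : X} (hG : Dominates A G p) (hc : IsCompact (G \ {q})) (hnd : ¬Dominates A (G \ {q}) p)
    {f : C(X, ℂ)} (hf : f ∈ A) : f p = f q := by
  set k := f - algebraMap ℂ C(X, ℂ) (f q)
  have hkA : k ∈ A := A.sub_mem hf (A.algebraMap_mem _)
  refine eq_of_forall_dist_le fun ε hε => ?_
  obtain ⟨g, hgA, hgp, hg⟩ :=
    exists_apply_eq_one_norm_le_of_not_dominates hc hnd (ε := ε / (‖k‖ + 1)) (by positivity)
  obtain ⟨x, hxG, hx⟩ := hG (k * g) (A.mul_mem hkA hgA)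
  have hkp : (k * g) p = f p - f q := by simp [k, hgp]
  rw [hkp, ← dist_eq_norm] at hx
  rcases eq_or_ne x q with rfl | hxq
  · have hkx : (k * g) x = 0 := by simp [k]
    rw [hkx, norm_zero] at hx
    exact hx.trans hε.le
  calc dist (f p) (f q) ≤ ‖k x‖ * ‖g x‖ := by simpa using hx
    _ ≤ (‖k‖ + 1) * (ε / (‖k‖ + 1)) := by
        gcongr
        · exact (k.norm_coe_le_norm x).trans (le_add_of_nonneg_right zero_le_one)
        · exact hg x ⟨hxG, hxq⟩
    _ = ε := mul_div_cancel₀ _ (by positivity)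

theorem exists_forall_norm_sub_lt_of_dense_restrictSet {K : Set X} (hK : IsCompact K)
    (hdense : Dense (restrictSet A K)) {v : X → ℂ} (hv : ContinuousOn v K) {ε : ℝ}
    (hε : 0 < ε) : ∃ f ∈ A, ∀ x ∈ K, ‖f x - v x‖ < ε := by
  have := isCompact_iff_compactSpace.1 hK
  obtain ⟨_, ⟨f, hf, rfl⟩, hfv⟩ :=
    hdense.exists_dist_lt ⟨K.domRestrict v, hv.domRestrict⟩ hε
  refine ⟨f, hf, fun x hx => ?_⟩
  rw [dist_comm, ContinuousMap.dist_lt_iff hε] at hfv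
  simpa [dist_eq_norm, Set.domRestrict_apply] using hfv ⟨x, hx⟩

theorem exists_finset_apply_eq_zero_cover {K : Set X} (hK : IsCompact K) (hpK : p ∉ K)
    (hA : A.SeparatesPoints) : ∃ (t : Finset X) (u : X → C(X, ℂ)),
      (∀ i ∈ t, u i ∈ A ∧ u i p = 0) ∧ ∀ x ∈ K, ∃ i ∈ t, u i x ≠ 0 := by
  have : ∀ q ∈ K, ∃ u ∈ A, u p = 0 ∧ u q ≠ 0 := by
    intro q hq
    obtain ⟨_, ⟨f, hf, rfl⟩, hne⟩ := hA (ne_of_mem_of_not_mem hq hpK).symm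
    exact ⟨f - algebraMap ℂ _ (f p), A.sub_mem hf (A.algebraMap_mem _), by simp,
      by simpa [sub_eq_zero] using hne.symm⟩
  choose! u huA hup huq using this
  obtain ⟨t, htK, hcover⟩ := hK.elim_nhds_subcover (fun q => {x | u q x ≠ 0})
    fun q hq => (isOpen_ne_fun (u q).continuous continuous_const).mem_nhds (huq q hq)
  refine ⟨t, u, fun i hi => ⟨huA i (htK i hi), hup i (htK i hi)⟩, fun x hx => ?_⟩
  simpa using hcover hx

theorem exists_apply_eq_zero_norm_sub_one_lt [CompactSpace X] {K : Set X} (hK : IsCompact K)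
    (hpK : p ∉ K) (hA : A.SeparatesPoints) (hdense : Dense (restrictSet A K)) :
    ∃ s ∈ A, s p = 0 ∧ ∀ x ∈ K, ‖s x - 1‖ < 1 := by
  obtain ⟨t, u, hu, hcover⟩ := exists_finset_apply_eq_zero_cover hK hpK hA
  set σ : X → ℝ := fun x => ∑ i ∈ t, ‖u i x‖ ^ 2
  have hσ : ∀ x ∈ K, (σ x : ℂ) ≠ 0 := fun x hx => by
    obtain ⟨i, hit, hi⟩ := hcover x hx
    exact Complex.ofReal_ne_zero.2 (Finset.sum_pos' (fun _ _ => by positivity)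
      ⟨i, hit, by positivity⟩).ne'
  set v : X → X → ℂ := fun i x => star (u i x) / σ x
  have hv : ∀ x ∈ K, ∑ i ∈ t, u i x * v i x = 1 := fun x hx => by
    simp only [v, mul_div_assoc', ← Finset.sum_div]
    rw [div_eq_one_iff_eq (hσ x hx)]
    push_cast [σ, Complex.star_def, Complex.mul_conj, Complex.normSq_eq_norm_sq]
    rfl
  set M := ∑ i ∈ t, ‖u i‖
  have hw : ∀ i, ∃ w ∈ A, ∀ x ∈ K, ‖w x - v i x‖ < 1 / (M + 1) := fun i =>
    exists_forall_norm_sub_lt_of_dense_restrictSet hK hdense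
      (by fun_prop (disch := exact hσ)) (by positivity)
  choose w hwA hw using hw
  refine ⟨∑ i ∈ t, u i * w i, sum_mem fun i hi => A.mul_mem (hu i hi).1 (hwA i),
    by simpa using Finset.sum_eq_zero fun i hi => by simp [(hu i hi).2], fun x hx => ?_⟩
  calc ‖(∑ i ∈ t, u i * w i) x - 1‖ = ‖∑ i ∈ t, u i x * (w i x - v i x)‖ := by
        simp [← hv x hx, mul_sub, Finset.sum_sub_distrib]
    _ ≤ ∑ i ∈ t, ‖u i‖ * (1 / (M + 1)) := by
        refine norm_sum_le_of_le _ fun i _ => ?_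
        rw [norm_mul]
        exact mul_le_mul ((u i).norm_coe_le_norm x) (hw i x hx).le (norm_nonneg _)
          (norm_nonneg _)
    _ = M / (M + 1) := by rw [← Finset.sum_mul, mul_one_div]
    _ < 1 := by rw [div_lt_one (by positivity)]; linarith

theorem not_dominates_of_dense_restrictSet [CompactSpace X] {K : Set X} (hK : IsCompact K)
    (hpK : p ∉ K) (hA : A.SeparatesPoints) (hdense : Dense (restrictSet A K)) :
    ¬Dominates A K p := by
  intro hdom
  obtain ⟨s, hsA, hsp, hsK⟩ := exists_apply_eq_zero_norm_sub_one_lt hK hpK hA hdense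
  obtain ⟨x, hxK, hx⟩ := hdom (1 - s) (A.sub_mem A.one_mem hsA)
  have := hsK x hxK
  simp only [ContinuousMap.sub_apply, ContinuousMap.one_apply, hsp, sub_zero, norm_one] at hx
  rw [norm_sub_rev] at hx
  linarith

theorem not_dominates_of_notMem [CompactSpace X] {K : Set X} (hK : IsClosed K)
    (hKmax : ∀ P : Set X, Perfect P → P ⊆ K) (hA : A.SeparatesPoints)
    (hdense : Dense (restrictSet A K)) (hpK : p ∉ K) (hS : IsClosed S) (hpS : p ∉ S) :
    ¬Dominates A S p := by
  intro hdom
  obtain ⟨G, hGS, hG⟩ := exists_minimal_isClosed (P := (Dominates A · p))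
    (fun _ hne hch hc => Dominates.sInter hne hch hc) hS hdom
  suffices hGK : G ⊆ K from
    not_dominates_of_dense_restrictSet hK.isCompact hpK hA hdense (hG.prop.2.mono hGK)
  by_contra hGK
  obtain ⟨q, hqG, -, hq⟩ := exists_not_accPt_of_not_subset hK hKmax hGK
  obtain ⟨_, ⟨f, hf, rfl⟩, hne⟩ := hA (ne_of_mem_of_not_mem (hGS hqG) hpS).symm
  exact hne (hG.prop.2.apply_eq_of_not_dominates_diff_singleton
    (hG.prop.1.diff_singleton_of_not_accPt hq).isCompact (hG.not_diff_singleton hqG hq) hf)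

theorem IsDetermining.diff_singleton [CompactSpace X] (hB : IsClosed (B : Set C(X, ℂ)))
    {F : Set X} (hF : IsDetermining (Subalgebra.toSubmodule B) F) (hc : IsCompact (F \ {p}))
    (hnd : ¬Dominates B (F \ {p}) p) : IsDetermining (Subalgebra.toSubmodule B) (F \ {p}) := by
  intro h hh
  refine hB.mem_of_forall_dist_le fun ε hε => ?_
  obtain ⟨g, hgB, hgp, hg⟩ :=
    exists_apply_eq_one_norm_le_of_not_dominates hc hnd (ε := ε / (‖h p‖ + 1)) (by positivity)
  refine hF.exists_dist_le (b := h p • g) (B.smul_mem hgB _) hε fun x hx => ?_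
  rcases eq_or_ne x p with rfl | hxp
  · simp [hgp, hε.le]
  calc ‖h x - (h p • g) x‖ = ‖h p‖ * ‖g x‖ := by simp [hh x ⟨hx, hxp⟩]
    _ ≤ (‖h p‖ + 1) * (ε / (‖h p‖ + 1)) := by
        gcongr
        exacts [le_add_of_nonneg_right zero_le_one, hg x ⟨hx, hxp⟩]
    _ = ε := mul_div_cancel₀ _ (by positivity)

end Dominates

theorem stmt13_general {X : Type*} [TopologicalSpace X] [CompactSpace X]
    (K : Set X) (hKperf : Perfect K)
    (hKmax : ∀ P : Set X, Perfect P → P ⊆ K)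
    (A : Subalgebra ℂ C(X, ℂ)) (hA : A.SeparatesPoints)
    (hdense : Dense (restrictSet A K)) :
    Dense (A : Set C(X, ℂ)) := by
  set B := A.topologicalClosure
  have hB : IsClosed (B : Set C(X, ℂ)) := A.isClosed_topologicalClosure
  obtain ⟨F, -, hF⟩ := exists_minimal_isClosed (P := IsDetermining (Subalgebra.toSubmodule B))
    (fun _ hne hch hc => IsDetermining.sInter hB hne hch hc) isClosed_univ
    fun h hh => by simp [show h = 0 from ContinuousMap.ext fun x => hh x trivial]
  have hFK : F ⊆ K := by
    by_contra hFK
    obtain ⟨p, hpF, hpK, hp⟩ := exists_not_accPt_of_not_subset hKperf.closed hKmax hFK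
    have hcl := hF.prop.1.diff_singleton_of_not_accPt hp
    refine hF.not_diff_singleton hpF hp (hF.prop.2.diff_singleton hB hcl.isCompact fun hdom => ?_)
    exact not_dominates_of_notMem hKperf.closed hKmax hA hdense hpK hcl (fun h => h.2 rfl)
      (hdom.of_le A.le_topologicalClosure)
  have hK := hF.prop.2.mono hFK
  rw [dense_iff_closure_eq, ← Subalgebra.topologicalClosure_coe]
  refine eq_univ_of_forall fun h => hB.mem_of_forall_dist_le fun ε hε => ?_
  obtain ⟨g, hgA, hg⟩ := exists_forall_norm_sub_lt_of_dense_restrictSet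
    hKperf.closed.isCompact hdense h.continuous.continuousOn hε
  exact hK.exists_dist_le (A.le_topologicalClosure hgA) hε fun x hx => by
    rw [norm_sub_rev]; exact (hg x hx).le

/-- Let `X` be a compact Hausdorff non-scattered space with perfect kernel `K = ker X`
(the largest perfect subset, nonempty) and let `A ≤ C(X, ℂ)` be a subalgebra separating
points (and containing constants).  If `A↾K` is dense in `C(K, ℂ)`, then `A` is dense
in `C(X, ℂ)`. -/
theorem stmt13 {X : Type*} [TopologicalSpace X] [CompactSpace X] [T2Space X]
    (K : Set X) (hKperf : Perfect K) (hKne : K.Nonempty)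
    (hKmax : ∀ P : Set X, Perfect P → P ⊆ K)
    (A : Subalgebra ℂ C(X, ℂ)) (hA : A.SeparatesPoints)
    (hdense : Dense (restrictSet A K)) :
    Dense (A : Set C(X, ℂ)) :=
  stmt13_general K hKperf hKmax A hA hdense
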